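/- arXiv:2402.13008 — 10 statements merged into one kernel-verified Lean document; each statement's English description precedes it below -/
import Mathlib

section
/- If P is a k-plex with |P| ≥ 2k - 1, then the induced subgraph G[P] is connected and has diameter at most 2. -/
open Finset

variable {V : Type*} [Fintype V] [DecidableEq V]

/-- A set `P` of vertices is a `k`-plex in `G` if every `u ∈ P` has degree at least
`|P| - k` in the induced subgraph `G[P]`, i.e. `|P| ≤ d_P(u) + k`. -/
def SimpleGraph.IsKPlex (G : SimpleGraph V) [DecidableRel G.Adj] (k : ℕ) (P : Finset V) : Prop :=
  ∀ u ∈ P, P.card ≤ (P.filter (fun x => G.Adj u x)).card + k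

/-!
Two distinct non-adjacent vertices `u, v` of a `k`-plex `P` have at least `|P| - k` neighbours
each inside `P \ {u, v}`, a set of size `|P| - 2`. If `|P| ≥ 2k - 1` then
`2 (|P| - k) > |P| - 2`, so the two neighbourhoods meet: `u` and `v` have a common neighbour.
Hence any two vertices of `G[P]` are joined by a walk of length at most 2.
-/

namespace SimpleGraph

omit [Fintype V] in
theorem exists_common_neighbor_of_card_lt (G : SimpleGraph V) [DecidableRel G.Adj]
    {P : Finset V} {u v : V} (hu : u ∈ P) (hv : v ∈ P) (hne : u ≠ v) (hnadj : ¬G.Adj u v)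
    (hlt : P.card < (P.filter (G.Adj u)).card + (P.filter (G.Adj v)).card + 2) :
    ∃ w ∈ P, G.Adj u w ∧ G.Adj v w := by
  by_contra! hcon
  have hdisj : Disjoint (P.filter (G.Adj u)) (P.filter (G.Adj v)) := by
    refine Finset.disjoint_left.mpr fun w hwu hwv => ?_
    rw [mem_filter] at hwu hwv
    exact hcon w hwu.1 hwu.2 hwv.2
  have hsub : P.filter (G.Adj u) ∪ P.filter (G.Adj v) ⊆ (P.erase u).erase v := by
    intro w hw
    simp only [mem_union, mem_filter] at hw
    rcases hw with ⟨hwP, huw⟩ | ⟨hwP, hvw⟩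
    · exact mem_erase.mpr ⟨by rintro rfl; exact hnadj huw,
        mem_erase.mpr ⟨huw.ne.symm, hwP⟩⟩
    · exact mem_erase.mpr ⟨hvw.ne.symm,
        mem_erase.mpr ⟨by rintro rfl; exact hnadj hvw.symm, hwP⟩⟩
  have hcard_erase : ((P.erase u).erase v).card + 2 = P.card := by
    rw [← card_erase_add_one hu, ← card_erase_add_one (mem_erase.mpr ⟨hne.symm, hv⟩)]
  have := card_le_card hsub
  rw [card_union_of_disjoint hdisj] at this
  omega

omit [Fintype V] in
theorem IsKPlex.exists_common_neighbor {G : SimpleGraph V} [DecidableRel G.Adj] {k : ℕ}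
    {P : Finset V} (hP : G.IsKPlex k P) (hcard : 2 * k < P.card + 2)
    {u v : V} (hu : u ∈ P) (hv : v ∈ P) (hne : u ≠ v) (hnadj : ¬G.Adj u v) :
    ∃ w ∈ P, G.Adj u w ∧ G.Adj v w := by
  refine G.exists_common_neighbor_of_card_lt hu hv hne hnadj ?_
  have hdeg_u : P.card ≤ (P.filter (G.Adj u)).card + k := hP u hu
  have hdeg_v : P.card ≤ (P.filter (G.Adj v)).card + k := hP v hv
  omega

theorem exists_walk_length_le_two {W : Type*} (H : SimpleGraph W)
    (h : ∀ u v, u ≠ v → ¬H.Adj u v → ∃ w, H.Adj u w ∧ H.Adj w v) (u v : W) :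
    ∃ p : H.Walk u v, p.length ≤ 2 := by
  by_cases huv : u = v
  · subst huv
    exact ⟨.nil, by simp⟩
  by_cases hadj : H.Adj u v
  · exact ⟨hadj.toWalk, by simp⟩
  obtain ⟨w, huw, hwv⟩ := h u v huv hadj
  exact ⟨.cons huw hwv.toWalk, by simp⟩

omit [Fintype V] in
theorem IsKPlex.exists_walk_induce_length_le_two {G : SimpleGraph V} [DecidableRel G.Adj]
    {k : ℕ} {P : Finset V} (hP : G.IsKPlex k P) (hcard : 2 * k < P.card + 2)
    (u v : (P : Set V)) : ∃ p : (G.induce (P : Set V)).Walk u v, p.length ≤ 2 := by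
  refine exists_walk_length_le_two _ (fun u v hne hnadj => ?_) u v
  obtain ⟨w, hw, huw, hvw⟩ := hP.exists_common_neighbor hcard u.2 v.2
    (Subtype.coe_injective.ne hne) hnadj
  exact ⟨⟨w, hw⟩, huw, hvw.symm⟩

end SimpleGraph

theorem kplex_connected_diameter_le_two (G : SimpleGraph V) [DecidableRel G.Adj]
    (k : ℕ) (hk : 1 ≤ k) (P : Finset V) (hP : G.IsKPlex k P)
    (hcard : (2 * k - 1 : ℤ) ≤ (P.card : ℤ)) :
    (G.induce (P : Set V)).Connected ∧
      ∀ u v : (P : Set V), (G.induce (P : Set V)).dist u v ≤ 2 := by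
  have hwalk := hP.exists_walk_induce_length_le_two (by omega)
  obtain ⟨x, hx⟩ : P.Nonempty := card_pos.mp (by omega)
  have : Nonempty (P : Set V) := ⟨⟨x, hx⟩⟩
  refine ⟨.mk fun u v => (hwalk u v).elim fun p _ => p.reachable, fun u v => ?_⟩
  obtain ⟨p, hp⟩ := hwalk u v
  exact (SimpleGraph.dist_le p).trans hp
end

section
/- Let P be a k-plex in graph G, and let P_m ⊇ P be any k-plex containing P with P_m ⊆ P ∪ C for some candidate set C disjoint from P. Then for any two vertices u, v ∈ P, |P_m| ≤ |P| + sup_P(u) + sup_P(v) + |N_C(u) ∩ N_C(v)|, where sup_P(w) = k - (|P| - d_P(w)) and N_C(w) = {x ∈ C : (w,x) ∈ E}. -/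
open Finset

variable {V : Type*} [Fintype V] [DecidableEq V]

theorem kplex_upper_bound_vertex_pair (G : SimpleGraph V) [DecidableRel G.Adj]
    (k : ℕ) (hk : 1 ≤ k) (P Pm C : Finset V)
    (hP : G.IsKPlex k P) (hPm : G.IsKPlex k Pm)
    (hsub : P ⊆ Pm) (hsub2 : Pm ⊆ P ∪ C) (hdisj : Disjoint P C)
    (u v : V) (hu : u ∈ P) (hv : v ∈ P) :
    (Pm.card : ℤ) ≤ (P.card : ℤ)
      + ((k : ℤ) - ((P.card : ℤ) - ((P.filter (fun x => G.Adj u x)).card : ℤ)))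
      + ((k : ℤ) - ((P.card : ℤ) - ((P.filter (fun x => G.Adj v x)).card : ℤ)))
      + ((C.filter (fun x => G.Adj u x ∧ G.Adj v x)).card : ℤ) := by
  classical
  set D := Pm \ P with hD
  have hDC : D ⊆ C := by
    intro x hx
    have hx' := mem_sdiff.mp hx
    rcases mem_union.mp (hsub2 hx'.1) with h | h
    · exact absurd h hx'.2
    · exact h
  have hcard : D.card + P.card = Pm.card := card_sdiff_add_card_eq_card hsub
  have hunion : P ∪ D = Pm := union_sdiff_of_subset hsub
  have hdisjPD : Disjoint P D := disjoint_sdiff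
  have hsplit : ∀ (p : V → Prop) [DecidablePred p],
      (Pm.filter p).card = (P.filter p).card + (D.filter p).card := by
    intro p _
    rw [← hunion, filter_union, card_union_of_disjoint (disjoint_filter_filter hdisjPD)]
  have hu' := hPm u (hsub hu)
  have hv' := hPm v (hsub hv)
  rw [hsplit] at hu' hv'
  have hDu : (D.filter (fun x => G.Adj u x)).card
      + (D.filter (fun x => ¬ G.Adj u x)).card = D.card :=
    card_filter_add_card_filter_not _
  have hDv : (D.filter (fun x => G.Adj v x)).card
      + (D.filter (fun x => ¬ G.Adj v x)).card = D.card :=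
    card_filter_add_card_filter_not _
  have hcoversub : D ⊆ (D.filter (fun x => G.Adj u x ∧ G.Adj v x))
      ∪ (D.filter (fun x => ¬ G.Adj u x)) ∪ (D.filter (fun x => ¬ G.Adj v x)) := by
    intro x hx
    simp only [mem_union, mem_filter]
    tauto
  have hcover : D.card ≤ (D.filter (fun x => G.Adj u x ∧ G.Adj v x)).card
      + (D.filter (fun x => ¬ G.Adj u x)).card + (D.filter (fun x => ¬ G.Adj v x)).card := by
    calc D.card ≤ _ := card_le_card hcoversub
      _ ≤ ((D.filter (fun x => G.Adj u x ∧ G.Adj v x))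
            ∪ (D.filter (fun x => ¬ G.Adj u x))).card
          + (D.filter (fun x => ¬ G.Adj v x)).card := card_union_le _ _
      _ ≤ _ := by
          have := card_union_le (D.filter (fun x => G.Adj u x ∧ G.Adj v x))
            (D.filter (fun x => ¬ G.Adj u x))
          omega
  have hsubC : (D.filter (fun x => G.Adj u x ∧ G.Adj v x)).card
      ≤ (C.filter (fun x => G.Adj u x ∧ G.Adj v x)).card :=
    card_le_card (filter_subset_filter _ hDC)
  zify at hu' hv' hDu hDv hcover hsubC hcard
  linarith
end

section
/- Let P be a k-plex in G, v_p ∈ P a vertex, and C a set disjoint from P. If sup_P(v_p) > |{w ∈ C : (v_p, w) ∉ E}|, where sup_P(v_p) = k - (|P| - d_P(v_p)), then P ∪ C is a k-plex provided every vertex u ∈ P ∪ C other than v_p satisfies d_{P∪C}(u) ≥ d_{P∪C}(v_p); in particular if v_p has minimum degree in G[P ∪ C] and d_{P∪C}(v_p) ≥ |P| + |C| - k, then P ∪ C is a k-plex. -/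
open Finset

variable {V : Type*} [Fintype V] [DecidableEq V]

theorem union_is_kplex_of_support_gt (G : SimpleGraph V) [DecidableRel G.Adj]
    (k : ℕ) (P C : Finset V) (v_p : V) (hP : G.IsKPlex k P)
    (hvp : v_p ∈ P) (hdisj : Disjoint P C)
    (hsup : ((C.filter (fun w => ¬ G.Adj v_p w)).card : ℤ) <
      (k : ℤ) - ((P.card : ℤ) - ((P.filter (fun x => G.Adj v_p x)).card : ℤ)))
    (hmin : ∀ u ∈ P ∪ C, u ≠ v_p →
      (((P ∪ C).filter (fun x => G.Adj v_p x)).card : ℕ) ≤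
        ((P ∪ C).filter (fun x => G.Adj u x)).card) :
    G.IsKPlex k (P ∪ C) := by
  intro u hu
  have hcard : (P ∪ C).card = P.card + C.card := card_union_of_disjoint hdisj
  have hvdeg : ((P ∪ C).filter (fun x => G.Adj v_p x)).card
      = (P.filter (fun x => G.Adj v_p x)).card + (C.filter (fun x => G.Adj v_p x)).card := by
    rw [filter_union, card_union_of_disjoint (disjoint_filter_filter hdisj)]
  have hCsplit : (C.filter (fun x => G.Adj v_p x)).card
      + (C.filter (fun w => ¬ G.Adj v_p w)).card = C.card :=
    card_filter_add_card_filter_not _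
  have hkey : (P ∪ C).card ≤ ((P ∪ C).filter (fun x => G.Adj v_p x)).card + k := by
    have hPk := hP v_p hvp
    omega
  by_cases h : u = v_p
  · subst h; exact hkey
  · exact le_trans hkey (by have := hmin u hu h; omega)
end

section
/- Let v_i be a vertex of G_i, let P be a k-plex with v_i ∈ P and |P| ≥ q, and let u ∈ P be a vertex at distance exactly 2 from v_i in G_i (so (u, v_i) ∉ E_i). Then |N_{G_i}(u) ∩ N_{G_i}(v_i)| ≥ q - 2k + 2. -/
open Finset

variable {V : Type*} [Fintype V] [DecidableEq V]

namespace SimpleGraph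

variable {G : SimpleGraph V} [DecidableRel G.Adj]

omit [Fintype V] in
lemma card_filter_adj_union_add_two_le {P : Finset V} {u v : V} (hu : u ∈ P) (hv : v ∈ P)
    (huv : u ≠ v) (hnadj : ¬ G.Adj u v) :
    (P.filter (G.Adj u) ∪ P.filter (G.Adj v)).card + 2 ≤ P.card := by
  have hsub : P.filter (G.Adj u) ∪ P.filter (G.Adj v) ⊆ (P.erase v).erase u := by
    intro x hx
    simp only [mem_union, mem_filter] at hx
    rcases hx with ⟨hxP, hux⟩ | ⟨hxP, hvx⟩
    · exact mem_erase.2 ⟨hux.ne', mem_erase.2 ⟨fun h => hnadj (h ▸ hux), hxP⟩⟩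
    · exact mem_erase.2 ⟨fun h => hnadj (h ▸ hvx.symm), mem_erase.2 ⟨hvx.ne', hxP⟩⟩
  have hu' : u ∈ P.erase v := mem_erase.2 ⟨huv, hu⟩
  have := card_le_card hsub
  have := card_erase_add_one hu'
  have := card_erase_add_one hv
  omega

/-- Both neighbourhoods inside `P` have size at least `|P| - k`, yet their union misses `u` and
`v`, so by inclusion–exclusion they overlap in at least `|P| - 2k + 2` vertices. -/
theorem IsKPlex.card_add_two_le_card_commonNeighbors_add {k : ℕ} {P : Finset V}
    (hP : G.IsKPlex k P) {u v : V} (hu : u ∈ P) (hv : v ∈ P) (huv : u ≠ v)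
    (hnadj : ¬ G.Adj u v) :
    P.card + 2 ≤ (G.neighborFinset u ∩ G.neighborFinset v).card + 2 * k := by
  have hA : P.card ≤ (P.filter (G.Adj u)).card + k := hP u hu
  have hB : P.card ≤ (P.filter (G.Adj v)).card + k := hP v hv
  have hunion := card_filter_adj_union_add_two_le hu hv huv hnadj
  have hinter : P.filter (G.Adj u) ∩ P.filter (G.Adj v) ⊆
      G.neighborFinset u ∩ G.neighborFinset v := by
    intro x hx
    simp only [mem_inter, mem_filter, mem_neighborFinset] at hx ⊢
    exact ⟨hx.1.2, hx.2.2⟩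
  have := card_le_card hinter
  have := card_inter_add_card_union (P.filter (G.Adj u)) (P.filter (G.Adj v))
  omega

end SimpleGraph

theorem seed_common_neighbors_dist_two_general (G : SimpleGraph V) [DecidableRel G.Adj]
    (k q : ℕ) (v_i : V) (P : Finset V) (hP : G.IsKPlex k P)
    (hvi : v_i ∈ P) (hq : q ≤ P.card) (u : V) (hu : u ∈ P)
    (hdist : G.dist u v_i = 2) :
    (q : ℤ) - 2 * (k : ℤ) + 2 ≤
      ((G.neighborFinset u ∩ G.neighborFinset v_i).card : ℤ) := by
  have hne : u ≠ v_i := by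
    rintro rfl
    simp at hdist
  have hnadj : ¬ G.Adj u v_i := fun h => by
    simp [SimpleGraph.dist_eq_one_iff_adj.2 h] at hdist
  have := hP.card_add_two_le_card_commonNeighbors_add hu hvi hne hnadj
  omega

theorem seed_common_neighbors_dist_two (G : SimpleGraph V) [DecidableRel G.Adj]
    (k q : ℕ) (hk : 1 ≤ k) (v_i : V) (P : Finset V) (hP : G.IsKPlex k P)
    (hvi : v_i ∈ P) (hq : q ≤ P.card) (u : V) (hu : u ∈ P)
    (hdist : G.dist u v_i = 2) :
    (q : ℤ) - 2 * (k : ℤ) + 2 ≤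
      ((G.neighborFinset u ∩ G.neighborFinset v_i).card : ℤ) :=
  seed_common_neighbors_dist_two_general G k q v_i P hP hvi hq u hu hdist
end

section
/- Let P be a k-plex containing a designated vertex v_i, with |P| ≥ q, and suppose u_1, u_2 ∈ P are both non-adjacent to v_i (u_1, u_2 ≠ v_i) and adjacent to each other. Then |N_{C}(u_1) ∩ N_{C}(u_2)| ≥ q - k - 2·max{k-2, 0}, where C = N_G(v_i) ∩ (P \ {v_i}), i.e., the common neighbors of u_1 and u_2 among the neighbors of v_i in P. -/
open Finset

variable {V : Type*} [Fintype V] [DecidableEq V]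

lemma kplex_nonnbr_aux (G : SimpleGraph V) [DecidableRel G.Adj]
    (k : ℕ) (P : Finset V) (v_i : V) (hP : G.IsKPlex k P) (hvi : v_i ∈ P)
    (u : V) (hu : u ∈ P) (hn : u ≠ v_i) (ha : ¬ G.Adj u v_i) :
    ((G.neighborFinset v_i ∩ P.erase v_i).filter (fun x => ¬ G.Adj u x)).card + 2 ≤ k := by
  set C := G.neighborFinset v_i ∩ P.erase v_i with hCdef
  set B := C.filter (fun x => ¬ G.Adj u x) with hBdef
  have hsub : insert u (insert v_i B) ⊆ P.filter (fun x => ¬ G.Adj u x) := by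
    intro x hx
    simp only [mem_insert] at hx
    rcases hx with rfl | rfl | hx
    · simp [hu, G.irrefl]
    · simp [hvi, ha]
    · simp only [hBdef, hCdef, mem_filter, mem_inter, mem_erase] at hx
      simp [hx.1.2.2, hx.2]
  have huC : u ∉ insert v_i B := by
    intro h
    rcases mem_insert.1 h with h | h
    · exact hn h
    · have := (mem_filter.1 h).1
      rw [hCdef, mem_inter, SimpleGraph.mem_neighborFinset] at this
      exact ha this.1.symm
  have hvB : v_i ∉ B := by
    simp [hBdef, hCdef]
  have hcard : B.card + 2 ≤ (P.filter (fun x => ¬ G.Adj u x)).card := by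
    have := card_le_card hsub
    rwa [card_insert_of_notMem huC, card_insert_of_notMem hvB] at this
  have hsplit : (P.filter (fun x => G.Adj u x)).card + (P.filter (fun x => ¬ G.Adj u x)).card
      = P.card := card_filter_add_card_filter_not _
  have := hP u hu
  omega

theorem pair_prune_two_hop_adjacent (G : SimpleGraph V) [DecidableRel G.Adj]
    (k q : ℕ) (hk : 1 ≤ k) (P : Finset V) (v_i : V) (hP : G.IsKPlex k P)
    (hvi : v_i ∈ P) (hq : q ≤ P.card) (u1 u2 : V) (h1 : u1 ∈ P) (h2 : u2 ∈ P)
    (hn1 : u1 ≠ v_i) (hn2 : u2 ≠ v_i)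
    (ha1 : ¬ G.Adj u1 v_i) (ha2 : ¬ G.Adj u2 v_i) (h12 : G.Adj u1 u2) :
    (q : ℤ) - (k : ℤ) - 2 * max ((k : ℤ) - 2) 0 ≤
      ((((G.neighborFinset v_i ∩ P.erase v_i)).filter
          (fun x => G.Adj u1 x ∧ G.Adj u2 x)).card : ℤ) := by
  have hB1 := kplex_nonnbr_aux G k P v_i hP hvi u1 h1 hn1 ha1
  have hB2 := kplex_nonnbr_aux G k P v_i hP hvi u2 h2 hn2 ha2
  set C := G.neighborFinset v_i ∩ P.erase v_i with hCdef
  -- |P| ≤ |C| + k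
  have hPC : P.card ≤ C.card + k := by
    have hsub : P.filter (fun x => G.Adj v_i x) ⊆ C := by
      intro x hx
      simp only [mem_filter] at hx
      simp only [hCdef, mem_inter, mem_erase, SimpleGraph.mem_neighborFinset]
      exact ⟨hx.2, fun h => (G.irrefl (h ▸ hx.2)), hx.1⟩
    have := card_le_card hsub
    have := hP v_i hvi
    omega
  -- |C| ≤ F + B1 + B2
  have hF : C.card ≤ (C.filter (fun x => G.Adj u1 x ∧ G.Adj u2 x)).card
      + ((C.filter (fun x => ¬ G.Adj u1 x)).card + (C.filter (fun x => ¬ G.Adj u2 x)).card) := by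
    have hsplit : (C.filter (fun x => G.Adj u1 x ∧ G.Adj u2 x)).card
        + (C.filter (fun x => ¬ (G.Adj u1 x ∧ G.Adj u2 x))).card = C.card :=
      card_filter_add_card_filter_not _
    have hsub : C.filter (fun x => ¬ (G.Adj u1 x ∧ G.Adj u2 x))
        ⊆ C.filter (fun x => ¬ G.Adj u1 x) ∪ C.filter (fun x => ¬ G.Adj u2 x) := by
      intro x hx
      simp only [mem_filter, not_and_or] at hx
      rcases hx.2 with h | h
      · exact mem_union_left _ (mem_filter.2 ⟨hx.1, h⟩)
      · exact mem_union_right _ (mem_filter.2 ⟨hx.1, h⟩)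
    have := (card_le_card hsub).trans (card_union_le _ _)
    omega
  have hmax : (k : ℤ) - 2 ≤ max ((k : ℤ) - 2) 0 := le_max_left _ _
  have hmax0 : (0 : ℤ) ≤ max ((k : ℤ) - 2) 0 := le_max_right _ _
  push_cast
  omega
end

section
/- Let P be a k-plex containing a designated vertex v_i, with |P| ≥ q, and suppose u_1, u_2 ∈ P are distinct vertices both non-adjacent to v_i (u_1, u_2 ≠ v_i) and non-adjacent to each other. Then |N_C(u_1) ∩ N_C(u_2)| ≥ q - k - 2·max{k-3, 0}, where C = N_G(v_i) ∩ P. -/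
open Finset

variable {V : Type*} [Fintype V] [DecidableEq V]

/-! The bound comes from two applications of the `k`-plex condition. At `v_i` it gives
`|C| ≥ |P| - k`. At `u_j` it says that `u_j` has at most `k` non-neighbours in `P` (itself
included); besides the non-neighbours in `C` these include `u_j`, `v_i` and the other `u`, none
of which lies in `C`, so `u_j` misses at most `k - 3` vertices of `C`. Removing the vertices of
`C` missed by `u_1` or by `u_2` leaves at least `|P| - k - 2(k - 3)` common neighbours. -/

theorem Finset.card_le_card_filter_and_add_card_filter_not_add_card_filter_not {α : Type*}
    (s : Finset α) (p q : α → Prop) [DecidablePred p] [DecidablePred q] :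
    #s ≤ #(s.filter fun x => p x ∧ q x) + #(s.filter fun x => ¬p x) +
      #(s.filter fun x => ¬q x) := by
  have hp := card_filter_add_card_filter_not (s := s) p
  have hq := card_filter_add_card_filter_not (s := s.filter p) q
  have hsub : #((s.filter p).filter fun x => ¬q x) ≤ #(s.filter fun x => ¬q x) :=
    card_le_card (filter_subset_filter _ (filter_subset _ _))
  simp only [filter_filter] at hq hsub
  omega

namespace SimpleGraph.IsKPlex

variable {G : SimpleGraph V} [DecidableRel G.Adj] {k : ℕ} {P : Finset V}

theorem card_le_card_neighborFinset_inter_add (hP : G.IsKPlex k P) {v : V} (hv : v ∈ P) :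
    #P ≤ #(G.neighborFinset v ∩ P) + k := by
  have hC : P.filter (G.Adj v ·) = G.neighborFinset v ∩ P := by
    ext x; simp [and_comm]
  simpa [hC] using hP v hv

omit [Fintype V] [DecidableEq V] in
theorem card_le_of_forall_not_adj (hP : G.IsKPlex k P) {u : V} (hu : u ∈ P) {S : Finset V}
    (hSP : S ⊆ P) (hS : ∀ x ∈ S, ¬G.Adj u x) : #S ≤ k := by
  have hsub : S ⊆ P.filter fun x => ¬G.Adj u x := fun x hx => mem_filter.2 ⟨hSP hx, hS x hx⟩
  have := card_filter_add_card_filter_not (s := P) (G.Adj u ·)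
  have := hP u hu
  have := card_le_card hsub
  omega

theorem card_filter_not_adj_add_three_le (hP : G.IsKPlex k P) {v u w : V}
    (hv : v ∈ P) (hu : u ∈ P) (hw : w ∈ P) (huv : u ≠ v) (hwv : w ≠ v) (huw : u ≠ w)
    (hau : ¬G.Adj u v) (haw : ¬G.Adj w v) (h : ¬G.Adj u w) :
    #((G.neighborFinset v ∩ P).filter fun x => ¬G.Adj u x) + 3 ≤ k := by
  set S := (G.neighborFinset v ∩ P).filter fun x => ¬G.Adj u x
  have hdisj : Disjoint {u, v, w} S := by
    simp only [disjoint_insert_left, disjoint_singleton_left, S, mem_filter, mem_inter,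
      mem_neighborFinset]
    exact ⟨fun h => hau h.1.1.symm, fun h => G.irrefl h.1.1, fun h => haw h.1.1.symm⟩
  have hthree : #({u, v, w} : Finset V) = 3 :=
    card_eq_three.2 ⟨u, v, w, huv, huw, hwv.symm, rfl⟩
  rw [← hthree, add_comm, ← card_union_of_disjoint hdisj]
  refine hP.card_le_of_forall_not_adj hu ?_ ?_
  · simp only [union_subset_iff, insert_subset_iff, singleton_subset_iff, S]
    exact ⟨⟨hu, hv, hw⟩, (filter_subset _ _).trans inter_subset_right⟩
  · simp only [mem_union, mem_insert, mem_singleton, S, mem_filter]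
    rintro x ((rfl | rfl | rfl) | ⟨-, hx⟩)
    exacts [G.irrefl, hau, h, hx]

end SimpleGraph.IsKPlex

theorem pair_prune_two_hop_nonadjacent_general (G : SimpleGraph V) [DecidableRel G.Adj]
    (k q : ℕ) (P : Finset V) (v_i : V) (hP : G.IsKPlex k P)
    (hvi : v_i ∈ P) (hq : q ≤ P.card) (u1 u2 : V) (h1 : u1 ∈ P) (h2 : u2 ∈ P)
    (hne : u1 ≠ u2) (hn1 : u1 ≠ v_i) (hn2 : u2 ≠ v_i)
    (ha1 : ¬ G.Adj u1 v_i) (ha2 : ¬ G.Adj u2 v_i) (h12 : ¬ G.Adj u1 u2) :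
    (q : ℤ) - (k : ℤ) - 2 * max ((k : ℤ) - 3) 0 ≤
      (((G.neighborFinset v_i ∩ P).filter
          (fun x => G.Adj u1 x ∧ G.Adj u2 x)).card : ℤ) := by
  have hC := hP.card_le_card_neighborFinset_inter_add hvi
  have hmiss1 := hP.card_filter_not_adj_add_three_le hvi h1 h2 hn1 hn2 hne ha1 ha2 h12
  have hmiss2 := hP.card_filter_not_adj_add_three_le hvi h2 h1 hn2 hn1 hne.symm ha2 ha1
    (fun h => h12 h.symm)
  have hsplit :=
    card_le_card_filter_and_add_card_filter_not_add_card_filter_not (G.neighborFinset v_i ∩ P)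
      (G.Adj u1 ·) (G.Adj u2 ·)
  rw [max_eq_left (by omega)]
  omega

theorem pair_prune_two_hop_nonadjacent (G : SimpleGraph V) [DecidableRel G.Adj]
    (k q : ℕ) (hk : 1 ≤ k) (P : Finset V) (v_i : V) (hP : G.IsKPlex k P)
    (hvi : v_i ∈ P) (hq : q ≤ P.card) (u1 u2 : V) (h1 : u1 ∈ P) (h2 : u2 ∈ P)
    (hne : u1 ≠ u2) (hn1 : u1 ≠ v_i) (hn2 : u2 ≠ v_i)
    (ha1 : ¬ G.Adj u1 v_i) (ha2 : ¬ G.Adj u2 v_i) (h12 : ¬ G.Adj u1 u2) :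
    (q : ℤ) - (k : ℤ) - 2 * max ((k : ℤ) - 3) 0 ≤
      (((G.neighborFinset v_i ∩ P).filter
          (fun x => G.Adj u1 x ∧ G.Adj u2 x)).card : ℤ) :=
  pair_prune_two_hop_nonadjacent_general G k q P v_i hP hvi hq u1 u2 h1 h2 hne hn1 hn2 ha1 ha2 h12
end

section
/- Let P be a k-plex containing a designated vertex v_i with |P| ≥ q. Suppose u_1 ∈ P is non-adjacent to v_i (u_1 ≠ v_i) and u_2 ∈ P is adjacent to v_i, with (u_1, u_2) ∈ E. Let C = (N_G(v_i) ∩ P) \ {u_2}. Then |N_C(u_1) ∩ N_C(u_2)| ≥ q - 2k - 2·max{k-2, 0}. -/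
/-!
`C` has at least `|P| - k - 1` vertices, since `v_i` misses at most `k` vertices of `P` and `u2`
is removed. Among the at most `k` non-neighbours of `u1` in `P` are `u1` and `v_i`, neither in
`C`, so `u1` misses at most `k - 2` vertices of `C` (in particular `k ≥ 2`); likewise `u2` misses
at most `k - 1`. Hence at least `|P| - 3k + 2 ≥ q - 4k + 4` vertices of `C` are adjacent to both.
-/

open Finset

variable {V : Type*} [Fintype V] [DecidableEq V]

theorem Finset.card_le_card_filter_and_add_card_filter_not_add {α : Type*} (s : Finset α)
    (p q : α → Prop) [DecidablePred p] [DecidablePred q] :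
    #s ≤ #(s.filter fun x => p x ∧ q x) + #(s.filter fun x => ¬ p x) +
      #(s.filter fun x => ¬ q x) := by
  classical
  calc #s ≤ #((s.filter fun x => p x ∧ q x) ∪ (s.filter fun x => ¬ p x) ∪
        (s.filter fun x => ¬ q x)) :=
        card_le_card fun x hx => by simp only [mem_union, mem_filter]; tauto
    _ ≤ _ := (card_union_le _ _).trans (Nat.add_le_add_right (card_union_le _ _) _)

namespace SimpleGraph.IsKPlex

variable {G : SimpleGraph V} [DecidableRel G.Adj] {k : ℕ} {P : Finset V}

omit [Fintype V] [DecidableEq V] in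
theorem card_filter_not_adj_le (hP : G.IsKPlex k P) {u : V} (hu : u ∈ P) :
    #(P.filter fun x => ¬ G.Adj u x) ≤ k := by
  have := hP u hu
  have := card_filter_add_card_filter_not (s := P) (p := fun x => G.Adj u x)
  omega

omit [Fintype V] in
theorem card_filter_not_adj_add_card_le (hP : G.IsKPlex k P) {u : V} (hu : u ∈ P)
    {S T : Finset V} (hSP : S ⊆ P) (hTP : T ⊆ P) (hST : Disjoint S T)
    (hT : ∀ x ∈ T, ¬ G.Adj u x) :
    #(S.filter fun x => ¬ G.Adj u x) + #T ≤ k :=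
  calc #(S.filter fun x => ¬ G.Adj u x) + #T
      = #((S.filter fun x => ¬ G.Adj u x) ∪ T) :=
        (card_union_of_disjoint (hST.mono_left (filter_subset _ _))).symm
    _ ≤ #(P.filter fun x => ¬ G.Adj u x) :=
        card_le_card (union_subset (filter_subset_filter _ hSP)
          fun x hx => mem_filter.2 ⟨hTP hx, hT x hx⟩)
    _ ≤ k := hP.card_filter_not_adj_le hu

end SimpleGraph.IsKPlex

theorem pair_prune_mixed_adjacent_general (G : SimpleGraph V) [DecidableRel G.Adj]
    (k q : ℕ) (P : Finset V) (v_i : V) (hP : G.IsKPlex k P)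
    (hvi : v_i ∈ P) (hq : q ≤ P.card) (u1 u2 : V) (h1 : u1 ∈ P) (h2 : u2 ∈ P)
    (hn1 : u1 ≠ v_i) (ha1 : ¬ G.Adj u1 v_i) (ha2 : G.Adj u2 v_i) :
    (q : ℤ) - 2 * (k : ℤ) - 2 * max ((k : ℤ) - 2) 0 ≤
      ((((G.neighborFinset v_i ∩ P).erase u2).filter
          (fun x => G.Adj u1 x ∧ G.Adj u2 x)).card : ℤ) := by
  set C := (G.neighborFinset v_i ∩ P).erase u2
  have hCP : C ⊆ P := (erase_subset _ _).trans inter_subset_right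
  have hu2 : u2 ∈ G.neighborFinset v_i ∩ P := by simp [ha2.symm, h2]
  have hC : #P ≤ #C + 1 + k := by
    have hN : G.neighborFinset v_i ∩ P = P.filter fun x => G.Adj v_i x := by
      ext x; simp [and_comm]
    rw [card_erase_add_one hu2, hN]
    exact hP v_i hvi
  have hmiss1 : #(C.filter fun x => ¬ G.Adj u1 x) + #{u1, v_i} ≤ k :=
    hP.card_filter_not_adj_add_card_le h1 hCP (by simp [insert_subset_iff, h1, hvi])
      (by simp [C, mt G.adj_symm ha1]) (by simp [ha1])
  have hmiss2 : #(C.filter fun x => ¬ G.Adj u2 x) + #{u2} ≤ k :=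
    hP.card_filter_not_adj_add_card_le h2 hCP (by simp [h2]) (by simp [C]) (by simp)
  rw [card_pair hn1] at hmiss1
  rw [card_singleton] at hmiss2
  have hcount := C.card_le_card_filter_and_add_card_filter_not_add (G.Adj u1) (G.Adj u2)
  omega

theorem pair_prune_mixed_adjacent (G : SimpleGraph V) [DecidableRel G.Adj]
    (k q : ℕ) (hk : 1 ≤ k) (P : Finset V) (v_i : V) (hP : G.IsKPlex k P)
    (hvi : v_i ∈ P) (hq : q ≤ P.card) (u1 u2 : V) (h1 : u1 ∈ P) (h2 : u2 ∈ P)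
    (hn1 : u1 ≠ v_i) (ha1 : ¬ G.Adj u1 v_i) (ha2 : G.Adj u2 v_i)
    (h12 : G.Adj u1 u2) :
    (q : ℤ) - 2 * (k : ℤ) - 2 * max ((k : ℤ) - 2) 0 ≤
      ((((G.neighborFinset v_i ∩ P).erase u2).filter
          (fun x => G.Adj u1 x ∧ G.Adj u2 x)).card : ℤ) :=
  pair_prune_mixed_adjacent_general G k q P v_i hP hvi hq u1 u2 h1 h2 hn1 ha1 ha2
end

section
/- Let P be a k-plex containing a designated vertex v_i with |P| ≥ q. Suppose u_1, u_2 ∈ P are both adjacent to v_i, distinct, and adjacent to each other. Let C = (N_G(v_i) ∩ P) \ {u_1, u_2}. Then |N_C(u_1) ∩ N_C(u_2)| ≥ q - 3k. -/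
open Finset

variable {V : Type*} [Fintype V] [DecidableEq V]

theorem pair_prune_neighbors_adjacent (G : SimpleGraph V) [DecidableRel G.Adj]
    (k q : ℕ) (hk : 1 ≤ k) (P : Finset V) (v_i : V) (hP : G.IsKPlex k P)
    (hvi : v_i ∈ P) (hq : q ≤ P.card) (u1 u2 : V) (h1 : u1 ∈ P) (h2 : u2 ∈ P)
    (hne : u1 ≠ u2) (ha1 : G.Adj u1 v_i) (ha2 : G.Adj u2 v_i)
    (h12 : G.Adj u1 u2) :
    (q : ℤ) - 3 * (k : ℤ) ≤
      ((((G.neighborFinset v_i ∩ P) \ {u1, u2}).filter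
          (fun x => G.Adj u1 x ∧ G.Adj u2 x)).card : ℤ) := by
  classical
  set C := (G.neighborFinset v_i ∩ P) \ ({u1, u2} : Finset V) with hCdef
  set F := C.filter (fun x => G.Adj u1 x ∧ G.Adj u2 x) with hFdef
  have hCsubP : C ⊆ P := fun x hx => (mem_inter.1 (mem_sdiff.1 hx).1).2
  -- |P| ≤ |C| + k + 2
  have hnb : G.neighborFinset v_i ∩ P = P.filter (fun x => G.Adj v_i x) := by
    ext x; simp [SimpleGraph.mem_neighborFinset, and_comm]
  have hPk : P.card ≤ (G.neighborFinset v_i ∩ P).card + k := by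
    rw [hnb]; exact hP v_i hvi
  have hsd : (G.neighborFinset v_i ∩ P).card ≤ C.card + 2 := by
    calc (G.neighborFinset v_i ∩ P).card
        ≤ C.card + ({u1, u2} : Finset V).card := card_le_card_sdiff_add_card
      _ ≤ C.card + 2 := by
          have : ({u1, u2} : Finset V).card ≤ 2 := card_insert_le u1 {u2}
          omega
  -- bound on non-neighbors within C, for u ∈ P \ C
  have key : ∀ u ∈ P, u ∉ C → (C.filter (fun x => ¬ G.Adj u x)).card + 1 ≤ k := by
    intro u hu huC
    have hpart : (P.filter (fun x => G.Adj u x)).card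
        + (P.filter (fun x => ¬ G.Adj u x)).card = P.card :=
      card_filter_add_card_filter_not _
    have hle : (P.filter (fun x => ¬ G.Adj u x)).card ≤ k := by
      have := hP u hu; omega
    have huMem : u ∈ P.filter (fun x => ¬ G.Adj u x) := by
      simp [hu, G.irrefl]
    have hsub : C.filter (fun x => ¬ G.Adj u x)
        ⊆ (P.filter (fun x => ¬ G.Adj u x)).erase u := by
      intro x hx
      rcases mem_filter.1 hx with ⟨hxC, hxA⟩
      have hxne : x ≠ u := by rintro rfl; exact huC hxC
      exact mem_erase.2 ⟨hxne, mem_filter.2 ⟨hCsubP hxC, hxA⟩⟩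
    have hcard := card_le_card hsub
    have hcer : ((P.filter (fun x => ¬ G.Adj u x)).erase u).card + 1
        = (P.filter (fun x => ¬ G.Adj u x)).card := card_erase_add_one huMem
    omega
  have hu1C : u1 ∉ C := by simp [hCdef]
  have hu2C : u2 ∉ C := by simp [hCdef]
  have k1 := key u1 h1 hu1C
  have k2 := key u2 h2 hu2C
  -- C ⊆ F ∪ bad1 ∪ bad2
  have hcover : C ⊆ F ∪ (C.filter (fun x => ¬ G.Adj u1 x))
      ∪ (C.filter (fun x => ¬ G.Adj u2 x)) := by
    intro x hx
    by_cases hA1 : G.Adj u1 x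
    · by_cases hA2 : G.Adj u2 x
      · exact mem_union_left _ (mem_union_left _ (mem_filter.2 ⟨hx, hA1, hA2⟩))
      · exact mem_union_right _ (mem_filter.2 ⟨hx, hA2⟩)
    · exact mem_union_left _ (mem_union_right _ (mem_filter.2 ⟨hx, hA1⟩))
  have hCcard : C.card ≤ F.card + (C.filter (fun x => ¬ G.Adj u1 x)).card
      + (C.filter (fun x => ¬ G.Adj u2 x)).card := by
    calc C.card ≤ (F ∪ (C.filter (fun x => ¬ G.Adj u1 x))
        ∪ (C.filter (fun x => ¬ G.Adj u2 x))).card := card_le_card hcover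
      _ ≤ (F ∪ (C.filter (fun x => ¬ G.Adj u1 x))).card
          + (C.filter (fun x => ¬ G.Adj u2 x)).card := card_union_le _ _
      _ ≤ _ := by
          have := card_union_le F (C.filter (fun x => ¬ G.Adj u1 x))
          omega
  have : q ≤ F.card + 3 * k := by omega
  push_cast
  omega
end

section
/- Let P be a k-plex and P_m ⊇ P ∪ {v_p} a k-plex containing P and a vertex v_p ∉ P, with P_m ⊆ P ∪ C ∪ {v_p} where C is disjoint from P ∪ {v_p}. Then |P_m ∩ ({v_p} ∪ {w ∈ C : (v_p, w) ∉ E})| ≤ sup_P(v_p), where sup_P(v_p) = k - |{x ∈ P : (v_p, x) ∉ E}|. -/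
/-!
In a `k`-plex every vertex has at most `k` non-neighbours, itself included. Inside `Pm`, the
non-neighbours of `v_p` lying in `P` and those in `{v_p} ∪ C` form two disjoint sets, because
`C` misses `P` and `v_p ∉ P`; so their sizes add up to at most `k`.
-/

open Finset

variable {V : Type*} [Fintype V] [DecidableEq V]

omit [Fintype V] in
theorem Finset.disjoint_filter_inter_insert {P Q C : Finset V} {v : V} (hv : v ∉ P)
    (hC : Disjoint C P) (p : V → Prop) [DecidablePred p] :
    Disjoint (P.filter p) (Q ∩ insert v (C.filter p)) := by
  rw [disjoint_left]
  intro x hxP hx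
  have hxP := (mem_filter.1 hxP).1
  rcases mem_insert.1 (mem_inter.1 hx).2 with rfl | hxC
  · exact hv hxP
  · exact disjoint_left.1 hC (mem_filter.1 hxC).1 hxP

namespace SimpleGraph

variable {G : SimpleGraph V} [DecidableRel G.Adj]

omit [Fintype V] [DecidableEq V] in
theorem IsKPlex.card_filter_not_adj_le_s16 {k : ℕ} {Q : Finset V} (hQ : G.IsKPlex k Q) {u : V}
    (hu : u ∈ Q) : (Q.filter (fun x => ¬ G.Adj u x)).card ≤ k := by
  have hdeg := hQ u hu
  have hsplit := card_filter_add_card_filter_not (s := Q) (fun x => G.Adj u x)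
  omega

omit [Fintype V] in
theorem inter_insert_filter_not_adj_subset (Q C : Finset V) (v : V) :
    Q ∩ insert v (C.filter (fun w => ¬ G.Adj v w)) ⊆ Q.filter (fun x => ¬ G.Adj v x) := by
  intro x hx
  obtain ⟨hxQ, hx⟩ := mem_inter.1 hx
  refine mem_filter.2 ⟨hxQ, ?_⟩
  rcases mem_insert.1 hx with rfl | hxC
  · exact G.irrefl
  · exact (mem_filter.1 hxC).2

end SimpleGraph

theorem kplex_support_bound_general (G : SimpleGraph V) [DecidableRel G.Adj]
    (k : ℕ) (P Pm C : Finset V) (v_p : V) (hvp : v_p ∉ P)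
    (hPm : G.IsKPlex k Pm)
    (hsub : insert v_p P ⊆ Pm)
    (hdisj : Disjoint C (insert v_p P)) :
    (((Pm ∩ insert v_p (C.filter (fun w => ¬ G.Adj v_p w))).card : ℤ)) ≤
      (k : ℤ) - ((P.filter (fun x => ¬ G.Adj v_p x)).card : ℤ) := by
  set A := P.filter (fun x => ¬ G.Adj v_p x)
  set B := Pm ∩ insert v_p (C.filter (fun w => ¬ G.Adj v_p w))
  have hA : A ⊆ Pm.filter (fun x => ¬ G.Adj v_p x) :=
    filter_subset_filter _ ((subset_insert _ _).trans hsub)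
  have hAB : Disjoint A B :=
    disjoint_filter_inter_insert hvp (hdisj.mono_right (subset_insert _ _)) _
  have hcard : A.card + B.card ≤ k := calc
    A.card + B.card = (A ∪ B).card := (card_union_of_disjoint hAB).symm
    _ ≤ (Pm.filter (fun x => ¬ G.Adj v_p x)).card :=
      card_le_card (union_subset hA (SimpleGraph.inter_insert_filter_not_adj_subset _ _ _))
    _ ≤ k := hPm.card_filter_not_adj_le_s16 (hsub (mem_insert_self _ _))
  omega

theorem kplex_support_bound (G : SimpleGraph V) [DecidableRel G.Adj]
    (k : ℕ) (P Pm C : Finset V) (v_p : V) (hvp : v_p ∉ P)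
    (hP : G.IsKPlex k P) (hPm : G.IsKPlex k Pm)
    (hsub : insert v_p P ⊆ Pm) (hsub2 : Pm ⊆ insert v_p (P ∪ C))
    (hdisj : Disjoint C (insert v_p P)) :
    (((Pm ∩ insert v_p (C.filter (fun w => ¬ G.Adj v_p w))).card : ℤ)) ≤
      (k : ℤ) - ((P.filter (fun x => ¬ G.Adj v_p x)).card : ℤ) :=
  kplex_support_bound_general G k P Pm C v_p hvp hPm hsub hdisj
end

section
/- Let P be a k-plex in G and v ∈ V \ P, and call a vertex u ∈ P saturated if |{x ∈ P : (u,x) ∉ E}| = k, counting u itself. Then P ∪ {v} is a k-plex if and only if v is adjacent to every saturated vertex of P and d_P(v) ≥ |P| + 1 - k. -/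
open Finset

variable {V : Type*} [Fintype V] [DecidableEq V]

theorem kplex_insert_iff (G : SimpleGraph V) [DecidableRel G.Adj]
    (k : ℕ) (hk : 1 ≤ k) (P : Finset V) (hP : G.IsKPlex k P) (v : V) (hv : v ∉ P) :
    G.IsKPlex k (insert v P) ↔
      ((∀ u ∈ P, P.card = (P.filter (fun x => G.Adj u x)).card + k → G.Adj u v) ∧
        P.card + 1 ≤ (P.filter (fun x => G.Adj v x)).card + k) := by
  have hcard : (insert v P).card = P.card + 1 := card_insert_of_notMem hv
  have hfv : (insert v P).filter (fun x => G.Adj v x) = P.filter (fun x => G.Adj v x) := by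
    rw [filter_insert, if_neg (G.irrefl)]
  constructor
  · intro h
    constructor
    · intro u hu hsat
      by_contra hadj
      have := h u (mem_insert_of_mem hu)
      rw [hcard, filter_insert, if_neg hadj] at this
      omega
    · have := h v (mem_insert_self v P)
      rw [hcard, hfv] at this
      exact this
  · rintro ⟨h1, h2⟩ u hu
    rcases mem_insert.mp hu with rfl | hu
    · rw [hcard, hfv]; exact h2
    · have hbase := hP u hu
      rw [hcard, filter_insert]
      by_cases hadj : G.Adj u v
      · rw [if_pos hadj, card_insert_of_notMem (fun hm => hv (mem_filter.mp hm).1)]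
        omega
      · rw [if_neg hadj]
        rcases lt_or_eq_of_le hbase with hlt | heq
        · omega
        · exact absurd (h1 u hu heq) hadj
end
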